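/- Let n, p be positive integers, X an n×p real matrix, B a p×p symmetric positive definite matrix, b ∈ ℝᵖ, y ∈ {0,1}ⁿ, d ∈ ℝᵖ, C a p×p symmetric positive definite matrix, and ν > 0. There exists a finite constant M > 0 such that for all β ∈ ℝᵖ and all w ∈ (0,∞)ⁿ, π(β|w) / h_ν(β; d, C) ≤ M · det(XᵀΩ(w)X + B⁻¹)^{1/2}, where π(β|w) = (2π)^{−p/2} det(Σ(w))^{−1/2} exp{−(1/2)(β−μ(w))ᵀ Σ(w)⁻¹ (β−μ(w))}. -/

import Mathlib

open MeasureTheory Matrix Real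

/-- The density of the Pólya-Gamma PG(1,0) distribution. -/
noncomputable def pgDensity (z : ℝ) : ℝ :=
  ∑' k : ℕ, (-1 : ℝ) ^ k * (2 * (k : ℝ) + 1) / Real.sqrt (2 * Real.pi * z ^ 3) *
    Real.exp (-(2 * (k : ℝ) + 1) ^ 2 / (8 * z))

/-- Σ(w) = (Xᵀ Ω(w) X + B⁻¹)⁻¹, with Ω(w) = diag(w₁,…,wₙ). -/
noncomputable def sigmaMat {n p : ℕ} (X : Matrix (Fin n) (Fin p) ℝ)
    (B : Matrix (Fin p) (Fin p) ℝ) (w : Fin n → ℝ) : Matrix (Fin p) (Fin p) ℝ :=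
  (Xᵀ * Matrix.diagonal w * X + B⁻¹)⁻¹

/-- μ(w) = Σ(w)[Xᵀ(y − (1/2)1ₙ) + B⁻¹b]. -/
noncomputable def muVec {n p : ℕ} (X : Matrix (Fin n) (Fin p) ℝ)
    (B : Matrix (Fin p) (Fin p) ℝ) (b : Fin p → ℝ) (y : Fin n → ℝ) (w : Fin n → ℝ) :
    Fin p → ℝ :=
  (sigmaMat X B w) *ᵥ (Xᵀ *ᵥ (fun i => y i - 1 / 2) + B⁻¹ *ᵥ b)

/-- π(β|w) : the N_p(μ(w), Σ(w)) density at β. -/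
noncomputable def piBeta {n p : ℕ} (X : Matrix (Fin n) (Fin p) ℝ)
    (B : Matrix (Fin p) (Fin p) ℝ) (b : Fin p → ℝ) (y : Fin n → ℝ)
    (w : Fin n → ℝ) (β : Fin p → ℝ) : ℝ :=
  (2 * Real.pi) ^ (-(p : ℝ) / 2) * (sigmaMat X B w).det ^ (-(1 : ℝ) / 2) *
    Real.exp (-(1 / 2) *
      ((β - muVec X B b y w) ⬝ᵥ ((sigmaMat X B w)⁻¹ *ᵥ (β - muVec X B b y w))))

/-- π(w|β) = ∏ᵢ cosh(|xᵢᵀβ|/2) exp{−(xᵢᵀβ)² wᵢ/2} g(wᵢ). -/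
noncomputable def piW {n p : ℕ} (X : Matrix (Fin n) (Fin p) ℝ)
    (w : Fin n → ℝ) (β : Fin p → ℝ) : ℝ :=
  ∏ i, (Real.cosh (|(X *ᵥ β) i| / 2) * Real.exp (-((X *ᵥ β) i) ^ 2 * w i / 2) *
    pgDensity (w i))

/-- The p-dimensional Student's t density with location d, scale matrix C and
degrees of freedom ν. -/
noncomputable def studentT {p : ℕ} (ν : ℝ) (d : Fin p → ℝ)
    (C : Matrix (Fin p) (Fin p) ℝ) (β : Fin p → ℝ) : ℝ :=
  (Real.Gamma ((ν + p) / 2) /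
      (Real.Gamma (ν / 2) * ν ^ ((p : ℝ) / 2) * Real.pi ^ ((p : ℝ) / 2) *
        Real.sqrt C.det)) *
    (1 + (1 / ν) * ((β - d) ⬝ᵥ (C⁻¹ *ᵥ (β - d)))) ^ (-(ν + p) / 2)

/-! The Gaussian factor `exp(-Q/2)` of `π(β|w)`, `Q = (β - μ(w))ᵀ Σ(w)⁻¹ (β - μ(w))`, beats the
polynomial growth of `1 / h_ν` uniformly in `w`: `Σ(w)⁻¹ = XᵀΩ(w)X + B⁻¹` dominates `B⁻¹ ≥ c·I`,
so `Q ≥ c‖β - μ(w)‖²` with `c` independent of `w`, and the same bound gives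
`‖μ(w)‖ ≤ p‖Xᵀ(y − 1/2) + B⁻¹b‖ / c`. What remains of the ratio is the normalising factor
`det(Σ(w))^{-1/2} = det(XᵀΩ(w)X + B⁻¹)^{1/2}`. -/

section QuadraticForm

variable {ι : Type*} [Fintype ι]

lemma dotProduct_le_card_mul_norm_mul_norm (x z : ι → ℝ) :
    x ⬝ᵥ z ≤ Fintype.card ι * (‖x‖ * ‖z‖) := by
  calc x ⬝ᵥ z ≤ ∑ i, |x i * z i| := Finset.sum_le_sum fun i _ => le_abs_self _
    _ ≤ ∑ _i : ι, ‖x‖ * ‖z‖ := Finset.sum_le_sum fun i _ => by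
        rw [abs_mul]
        exact mul_le_mul (norm_le_pi_norm x i) (norm_le_pi_norm z i) (abs_nonneg _)
          (norm_nonneg _)
    _ = Fintype.card ι * (‖x‖ * ‖z‖) := by simp

lemma smul_dotProduct_mulVec_smul (M : Matrix ι ι ℝ) (a : ℝ) (x : ι → ℝ) :
    (a • x) ⬝ᵥ M *ᵥ (a • x) = a ^ 2 * (x ⬝ᵥ M *ᵥ x) := by
  rw [mulVec_smul, smul_dotProduct, dotProduct_smul, smul_eq_mul, smul_eq_mul]
  ring

lemma dotProduct_mulVec_eq_sq_norm_mul (M : Matrix ι ι ℝ) {x : ι → ℝ} (hx : x ≠ 0) :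
    x ⬝ᵥ M *ᵥ x = ‖x‖ ^ 2 * ((‖x‖⁻¹ • x) ⬝ᵥ M *ᵥ (‖x‖⁻¹ • x)) := by
  have : ‖x‖ ≠ 0 := norm_ne_zero_iff.mpr hx
  rw [smul_dotProduct_mulVec_smul]
  field_simp

lemma inv_norm_smul_mem_unitSphere {E : Type*} [NormedAddCommGroup E] [NormedSpace ℝ E]
    {x : E} (hx : x ≠ 0) : ‖x‖⁻¹ • x ∈ Metric.sphere (0 : E) 1 := by
  simpa using norm_smul_inv_norm (𝕜 := ℝ) hx

lemma Matrix.PosDef.exists_pos_mul_sq_norm_le {M : Matrix ι ι ℝ} (hM : M.PosDef) :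
    ∃ c, 0 < c ∧ ∀ x : ι → ℝ, c * ‖x‖ ^ 2 ≤ x ⬝ᵥ M *ᵥ x := by
  obtain ⟨c, hc, hcS⟩ := (isCompact_sphere (0 : ι → ℝ) 1).exists_forall_le'
    (f := fun x => x ⬝ᵥ M *ᵥ x) (by fun_prop) (a := 0)
    fun u hu => by
      simpa using hM.dotProduct_mulVec_pos (ne_zero_of_mem_sphere one_ne_zero ⟨u, hu⟩)
  refine ⟨c, hc, fun x => ?_⟩
  rcases eq_or_ne x 0 with rfl | hx
  · simp
  rw [dotProduct_mulVec_eq_sq_norm_mul M hx, mul_comm c]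
  exact mul_le_mul_of_nonneg_left (hcS _ (inv_norm_smul_mem_unitSphere hx)) (by positivity)

lemma exists_dotProduct_mulVec_le_mul_sq_norm (M : Matrix ι ι ℝ) :
    ∃ K, 0 < K ∧ ∀ x : ι → ℝ, x ⬝ᵥ M *ᵥ x ≤ K * ‖x‖ ^ 2 := by
  obtain ⟨K, hK⟩ := (isCompact_sphere (0 : ι → ℝ) 1).bddAbove_image
    (f := fun x => x ⬝ᵥ M *ᵥ x) (by fun_prop)
  refine ⟨max K 1, by positivity, fun x => ?_⟩
  rcases eq_or_ne x 0 with rfl | hx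
  · simp
  rw [dotProduct_mulVec_eq_sq_norm_mul M hx, mul_comm (max K 1)]
  refine mul_le_mul_of_nonneg_left ?_ (by positivity)
  exact (hK ⟨_, inv_norm_smul_mem_unitSphere hx, rfl⟩).trans (le_max_left _ _)

lemma Matrix.PosSemidef.dotProduct_mulVec_self_nonneg {M : Matrix ι ι ℝ} (hM : M.PosSemidef)
    (x : ι → ℝ) : 0 ≤ x ⬝ᵥ M *ᵥ x := by
  simpa using hM.dotProduct_mulVec_nonneg x

lemma dotProduct_mulVec_sub_le {M : Matrix ι ι ℝ} {K R : ℝ} (hK : 0 ≤ K)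
    (hM : ∀ x : ι → ℝ, x ⬝ᵥ M *ᵥ x ≤ K * ‖x‖ ^ 2) {x y z : ι → ℝ} (hyz : ‖y - z‖ ≤ R) :
    (x - z) ⬝ᵥ M *ᵥ (x - z) ≤ K * (‖x - y‖ + R) ^ 2 := by
  calc (x - z) ⬝ᵥ M *ᵥ (x - z) ≤ K * ‖x - z‖ ^ 2 := hM _
    _ ≤ K * (‖x - y‖ + R) ^ 2 := by
        gcongr
        linarith [norm_sub_le_norm_sub_add_norm_sub x y z]

lemma mul_sq_norm_le_dotProduct_add_mulVec {S M : Matrix ι ι ℝ} {c : ℝ} (hS : S.PosSemidef)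
    (hM : ∀ x : ι → ℝ, c * ‖x‖ ^ 2 ≤ x ⬝ᵥ M *ᵥ x) (x : ι → ℝ) :
    c * ‖x‖ ^ 2 ≤ x ⬝ᵥ (S + M) *ᵥ x := by
  rw [add_mulVec, dotProduct_add]
  linarith [hM x, hS.dotProduct_mulVec_self_nonneg x]

lemma norm_le_card_mul_norm_mulVec_div {A : Matrix ι ι ℝ} {c : ℝ} (hc : 0 < c)
    (hA : ∀ x : ι → ℝ, c * ‖x‖ ^ 2 ≤ x ⬝ᵥ A *ᵥ x) (x : ι → ℝ) :
    ‖x‖ ≤ Fintype.card ι * ‖A *ᵥ x‖ / c := by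
  rw [le_div_iff₀ hc]
  rcases (norm_nonneg x).eq_or_lt with h0 | h0
  · rw [← h0, zero_mul]; positivity
  · nlinarith [hA x, dotProduct_le_card_mul_norm_mul_norm x (A *ᵥ x)]

end QuadraticForm

lemma exists_rpow_one_add_le_mul_exp {s a : ℝ} (hs : 0 ≤ s) (ha : 0 < a) :
    ∃ M, 0 < M ∧ ∀ x : ℝ, 0 ≤ x → (1 + x) ^ s ≤ M * exp (a * x) := by
  set δ := a / (s + a)
  have hδ : 0 < δ := div_pos ha (by linarith)
  have hδ1 : δ ≤ 1 := div_le_one_of_le₀ (by linarith) (by positivity)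
  have hsδ : s * δ ≤ a := by
    rw [← mul_div_assoc, div_le_iff₀ (by positivity)]
    nlinarith
  refine ⟨δ⁻¹ ^ s, by positivity, fun x hx => ?_⟩
  -- `1 + x ≤ δ⁻¹ (1 + δx) ≤ δ⁻¹ exp(δx)`
  have hbase : 1 + x ≤ δ⁻¹ * exp (δ * x) := by
    rw [le_inv_mul_iff₀ hδ]
    nlinarith [add_one_le_exp (δ * x)]
  calc (1 + x) ^ s ≤ (δ⁻¹ * exp (δ * x)) ^ s := rpow_le_rpow (by linarith) hbase hs
    _ = δ⁻¹ ^ s * exp (s * δ * x) := by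
        rw [mul_rpow (by positivity) (by positivity), ← exp_mul]
        ring_nf
    _ ≤ δ⁻¹ ^ s * exp (a * x) := by gcongr

lemma exists_exp_neg_mul_rpow_one_add_le {s c K R ν : ℝ} (hs : 0 ≤ s) (hc : 0 < c)
    (hK : 0 < K) (hν : 0 < ν) :
    ∃ M, 0 < M ∧ ∀ u Q q : ℝ, 0 ≤ q → c * u ^ 2 ≤ Q → q ≤ K * (u + R) ^ 2 →
      exp (-(1 / 2) * Q) * (1 + 1 / ν * q) ^ s ≤ M := by
  obtain ⟨M, hM, hpoly⟩ := exists_rpow_one_add_le_mul_exp hs (a := c * ν / (4 * K))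
    (by positivity)
  refine ⟨M * exp (c * R ^ 2 / 2), by positivity, fun u Q q hq hQ hqK => ?_⟩
  have hexp : -(1 / 2) * Q + c * ν / (4 * K) * (1 / ν * q) ≤ c * R ^ 2 / 2 := by
    have : c * ν / (4 * K) * (1 / ν * q) ≤ c / 4 * (u + R) ^ 2 := by
      calc c * ν / (4 * K) * (1 / ν * q)
          ≤ c * ν / (4 * K) * (1 / ν * (K * (u + R) ^ 2)) := by gcongr
        _ = c / 4 * (u + R) ^ 2 := by field_simp
    nlinarith [sq_nonneg (u - R)]
  calc exp (-(1 / 2) * Q) * (1 + 1 / ν * q) ^ s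
      ≤ exp (-(1 / 2) * Q) * (M * exp (c * ν / (4 * K) * (1 / ν * q))) := by
        gcongr; exact hpoly _ (by positivity)
    _ = M * exp (-(1 / 2) * Q + c * ν / (4 * K) * (1 / ν * q)) := by rw [exp_add]; ring
    _ ≤ M * exp (c * R ^ 2 / 2) := by gcongr

section PolyaGammaModel

variable {n p : ℕ} {X : Matrix (Fin n) (Fin p) ℝ} {B : Matrix (Fin p) (Fin p) ℝ}
  {w : Fin n → ℝ}

lemma posSemidef_transpose_mul_diagonal_mul (hw : ∀ i, 0 ≤ w i) :
    (Xᵀ * diagonal w * X).PosSemidef := by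
  simpa using (PosSemidef.diagonal (d := w) hw).conjTranspose_mul_mul_same X

lemma mulVec_muVec (b : Fin p → ℝ) (y : Fin n → ℝ)
    (hA : IsUnit (Xᵀ * diagonal w * X + B⁻¹).det) :
    (Xᵀ * diagonal w * X + B⁻¹) *ᵥ muVec X B b y w =
      Xᵀ *ᵥ (fun i => y i - 1 / 2) + B⁻¹ *ᵥ b := by
  rw [muVec, sigmaMat, mulVec_mulVec, mul_nonsing_inv _ hA, one_mulVec]

lemma norm_muVec_le (b : Fin p → ℝ) (y : Fin n → ℝ) (hB : B.PosDef) (hw : ∀ i, 0 ≤ w i)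
    {c : ℝ} (hc : 0 < c) (hBc : ∀ x : Fin p → ℝ, c * ‖x‖ ^ 2 ≤ x ⬝ᵥ B⁻¹ *ᵥ x) :
    ‖muVec X B b y w‖ ≤ p * ‖Xᵀ *ᵥ (fun i => y i - 1 / 2) + B⁻¹ *ᵥ b‖ / c := by
  have hΩ := posSemidef_transpose_mul_diagonal_mul (X := X) hw
  have hA := PosDef.posSemidef_add hΩ hB.inv
  have := norm_le_card_mul_norm_mulVec_div hc (mul_sq_norm_le_dotProduct_add_mulVec hΩ hBc)
    (muVec X B b y w)
  rwa [mulVec_muVec b y hA.det_pos.ne'.isUnit, Fintype.card_fin] at this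

lemma piBeta_eq (b : Fin p → ℝ) (y : Fin n → ℝ) (β : Fin p → ℝ)
    (hA : (Xᵀ * diagonal w * X + B⁻¹).PosDef) :
    piBeta X B b y w β = (2 * π) ^ (-(p : ℝ) / 2) *
      sqrt (Xᵀ * diagonal w * X + B⁻¹).det *
      exp (-(1 / 2) * ((β - muVec X B b y w) ⬝ᵥ
        (Xᵀ * diagonal w * X + B⁻¹) *ᵥ (β - muVec X B b y w))) := by
  have hdet := hA.det_pos
  rw [piBeta, sigmaMat, nonsing_inv_nonsing_inv _ hdet.ne'.isUnit, det_nonsing_inv,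
    Ring.inverse_eq_inv', inv_rpow hdet.le, neg_div 2 (1 : ℝ), rpow_neg hdet.le, inv_inv,
    sqrt_eq_rpow]

end PolyaGammaModel

noncomputable def studentTConst (ν : ℝ) (p : ℕ) (C : Matrix (Fin p) (Fin p) ℝ) : ℝ :=
  Gamma ((ν + p) / 2) /
    (Gamma (ν / 2) * ν ^ ((p : ℝ) / 2) * π ^ ((p : ℝ) / 2) * sqrt C.det)

lemma studentTConst_pos {ν : ℝ} {p : ℕ} {C : Matrix (Fin p) (Fin p) ℝ} (hν : 0 < ν)
    (hC : C.PosDef) : 0 < studentTConst ν p C := by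
  have := Gamma_pos_of_pos (show 0 < (ν + p) / 2 by positivity)
  have := Gamma_pos_of_pos (half_pos hν)
  have := sqrt_pos.mpr hC.det_pos
  unfold studentTConst
  positivity

lemma studentT_eq {p : ℕ} (ν : ℝ) (d : Fin p → ℝ) (C : Matrix (Fin p) (Fin p) ℝ)
    (β : Fin p → ℝ) :
    studentT ν d C β = studentTConst ν p C *
      (1 + 1 / ν * ((β - d) ⬝ᵥ C⁻¹ *ᵥ (β - d))) ^ (-((ν + p) / 2)) := by
  rw [studentT, studentTConst, neg_div]

lemma piBeta_div_studentT_eq {n p : ℕ} {X : Matrix (Fin n) (Fin p) ℝ}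
    {B : Matrix (Fin p) (Fin p) ℝ} {w : Fin n → ℝ} (b : Fin p → ℝ) (y : Fin n → ℝ)
    (β d : Fin p → ℝ) {C : Matrix (Fin p) (Fin p) ℝ} {ν : ℝ}
    (hA : (Xᵀ * diagonal w * X + B⁻¹).PosDef) (hC : C.PosDef) (hν : 0 < ν) :
    piBeta X B b y w β / studentT ν d C β =
      (2 * π) ^ (-(p : ℝ) / 2) / studentTConst ν p C *
        sqrt (Xᵀ * diagonal w * X + B⁻¹).det *
        (exp (-(1 / 2) * ((β - muVec X B b y w) ⬝ᵥ
            (Xᵀ * diagonal w * X + B⁻¹) *ᵥ (β - muVec X B b y w))) *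
          (1 + 1 / ν * ((β - d) ⬝ᵥ C⁻¹ *ᵥ (β - d))) ^ ((ν + p) / 2)) := by
  have hq := hC.inv.posSemidef.dotProduct_mulVec_self_nonneg (β - d)
  have hbase : 0 ≤ 1 + 1 / ν * ((β - d) ⬝ᵥ C⁻¹ *ᵥ (β - d)) := by positivity
  have hT := (studentTConst_pos (p := p) hν hC).ne'
  rw [piBeta_eq b y β hA, studentT_eq, rpow_neg hbase]
  field_simp

theorem stmt7_general {n p : ℕ}
    (X : Matrix (Fin n) (Fin p) ℝ) (B : Matrix (Fin p) (Fin p) ℝ) (hB : B.PosDef)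
    (b : Fin p → ℝ) (y : Fin n → ℝ)
    (d : Fin p → ℝ) (C : Matrix (Fin p) (Fin p) ℝ) (hC : C.PosDef) (ν : ℝ) (hν : 0 < ν) :
    ∃ M : ℝ, 0 < M ∧ ∀ (β : Fin p → ℝ) (w : Fin n → ℝ), (∀ i, 0 < w i) →
      piBeta X B b y w β / studentT ν d C β ≤
        M * Real.sqrt ((Xᵀ * Matrix.diagonal w * X + B⁻¹).det) := by
  set v := Xᵀ *ᵥ (fun i => y i - 1 / 2) + B⁻¹ *ᵥ b
  obtain ⟨c, hc, hBc⟩ := hB.inv.exists_pos_mul_sq_norm_le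
  obtain ⟨K, hK, hCK⟩ := exists_dotProduct_mulVec_le_mul_sq_norm C⁻¹
  obtain ⟨M, hM, hbound⟩ := exists_exp_neg_mul_rpow_one_add_le (s := (ν + p) / 2)
    (R := p * ‖v‖ / c + ‖d‖) (by positivity) hc hK hν
  have hT := studentTConst_pos (p := p) hν hC
  refine ⟨(2 * π) ^ (-(p : ℝ) / 2) / studentTConst ν p C * M, by positivity,
    fun β w hw => ?_⟩
  have hΩ := posSemidef_transpose_mul_diagonal_mul (X := X) fun i => (hw i).le
  have hμ := norm_muVec_le (X := X) b y hB (fun i => (hw i).le) hc hBc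
  rw [piBeta_div_studentT_eq b y β d (PosDef.posSemidef_add hΩ hB.inv) hC hν, mul_right_comm]
  gcongr
  exact hbound _ _ _ (hC.inv.posSemidef.dotProduct_mulVec_self_nonneg _)
    (mul_sq_norm_le_dotProduct_add_mulVec hΩ hBc _)
    (dotProduct_mulVec_sub_le hK.le hCK (by linarith [norm_sub_le (muVec X B b y w) d]))

/-- There is a constant M > 0 with
π(β|w)/h_ν(β; d, C) ≤ M · det(XᵀΩ(w)X + B⁻¹)^{1/2} for all β ∈ ℝᵖ and w ∈ (0,∞)ⁿ. -/
theorem stmt7 {n p : ℕ} (hn : 0 < n) (hp : 0 < p)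
    (X : Matrix (Fin n) (Fin p) ℝ) (B : Matrix (Fin p) (Fin p) ℝ) (hB : B.PosDef)
    (b : Fin p → ℝ) (y : Fin n → ℝ) (hy : ∀ i, y i = 0 ∨ y i = 1)
    (d : Fin p → ℝ) (C : Matrix (Fin p) (Fin p) ℝ) (hC : C.PosDef) (ν : ℝ) (hν : 0 < ν) :
    ∃ M : ℝ, 0 < M ∧ ∀ (β : Fin p → ℝ) (w : Fin n → ℝ), (∀ i, 0 < w i) →
      piBeta X B b y w β / studentT ν d C β ≤
        M * Real.sqrt ((Xᵀ * Matrix.diagonal w * X + B⁻¹).det) :=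
  stmt7_general X B hB b y d C hC ν hν
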